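/- arXiv:1711.03959 — 2 statements merged into one kernel-verified Lean document; each statement's English description precedes it below -/
import Mathlib

section
/- Let ℐ be a symmetric positive definite r×r matrix partitioned conformably with r = q₁ + q₂, let Z ∈ ℝ^r with blocks (Z₁, Z₂), let C = (ℐ^{−1})₂₂, and let Λ = ℝ^{q₁} × Λ₂ for an arbitrary nonempty set Λ₂ ⊆ ℝ^{q₂}. Then inf_{λ ∈ Λ} (λ − Z)ᵀ ℐ (λ − Z) = inf_{λ₂ ∈ Λ₂} (λ₂ − Z₂)ᵀ C^{−1} (λ₂ − Z₂). -/
/-! Write `I` in blocks `A B Bᵀ D`. The Schur complement identity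
`(x, y)ᵀ I (x, y) = (x + A⁻¹B y)ᵀ A (x + A⁻¹B y) + yᵀ (D - Bᵀ A⁻¹ B) y`, together with
`D - Bᵀ A⁻¹ B = C⁻¹` for `C = (I⁻¹)₂₂`, shows that for fixed `y` the form is at least
`yᵀ C⁻¹ y`, with equality at `x = -A⁻¹B y` since `A` is positive definite. Hence each value
in either set is bounded below by a value in the other, and the two infima agree. -/

namespace Matrix

variable {m n : Type*}

theorem IsHermitian.toBlocks₂₁ {α : Type*} [Star α] {M : Matrix (m ⊕ n) (m ⊕ n) α}
    (hM : M.IsHermitian) : M.toBlocks₂₁ = M.toBlocks₁₂ᴴ := by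
  ext i j
  exact (congrFun₂ hM (Sum.inr i) (Sum.inl j)).symm

theorem PosDef.toBlocks₁₁ {R : Type*} [Ring R] [PartialOrder R] [StarRing R]
    {M : Matrix (m ⊕ n) (m ⊕ n) R} (hM : M.PosDef) : M.toBlocks₁₁.PosDef :=
  hM.submatrix Sum.inl_injective

variable [Fintype m] [Fintype n] [DecidableEq m] [DecidableEq n]

theorem inv_toBlocks₂₂_inv_fromBlocks {α : Type*} [CommRing α] {A : Matrix m m α}
    {B : Matrix m n α} {C : Matrix n m α} {D : Matrix n n α}
    (hM : IsUnit (fromBlocks A B C D)) (hA : IsUnit A) :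
    ((fromBlocks A B C D)⁻¹.toBlocks₂₂)⁻¹ = D - C * A⁻¹ * B := by
  let := hA.invertible
  have hS : IsUnit (D - C * ⅟A * B) := by
    rw [isUnit_iff_isUnit_det] at hM ⊢
    rw [det_fromBlocks₁₁] at hM
    exact isUnit_of_mul_isUnit_right hM
  let := hS.invertible
  let := fromBlocks₁₁Invertible A B C D
  rw [← invOf_eq_nonsing_inv (fromBlocks A B C D), invOf_fromBlocks₁₁_eq, toBlocks_fromBlocks₂₂,
    invOf_eq_nonsing_inv, inv_inv_of_invertible, invOf_eq_nonsing_inv]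

variable {I : Matrix (m ⊕ n) (m ⊕ n) ℝ}

theorem PosDef.dotProduct_mulVec_sumElim (hI : I.PosDef) (x : m → ℝ) (y : n → ℝ) :
    Sum.elim x y ⬝ᵥ I *ᵥ Sum.elim x y =
      (x + (I.toBlocks₁₁⁻¹ * I.toBlocks₁₂) *ᵥ y) ⬝ᵥ
          I.toBlocks₁₁ *ᵥ (x + (I.toBlocks₁₁⁻¹ * I.toBlocks₁₂) *ᵥ y) +
        y ⬝ᵥ ((I⁻¹).toBlocks₂₂)⁻¹ *ᵥ y := by
  have hA := hI.toBlocks₁₁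
  let := hA.isUnit.invertible
  have hI' : fromBlocks I.toBlocks₁₁ I.toBlocks₁₂ I.toBlocks₁₂ᴴ I.toBlocks₂₂ = I := by
    rw [← hI.isHermitian.toBlocks₂₁, fromBlocks_toBlocks]
  have hC := inv_toBlocks₂₂_inv_fromBlocks (hI' ▸ hI.isUnit) hA.isUnit
  have hSchur := schur_complement_eq₁₁ I.toBlocks₁₂ I.toBlocks₂₂ x y hA.isHermitian
  rw [hI'] at hC hSchur
  simp only [star_trivial] at hSchur
  rw [hC, dotProduct_mulVec, hSchur, dotProduct_mulVec, dotProduct_mulVec]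

theorem PosDef.dotProduct_inv_toBlocks₂₂_inv_mulVec_le (hI : I.PosDef) (v : m ⊕ n → ℝ) :
    (v ∘ Sum.inr) ⬝ᵥ ((I⁻¹).toBlocks₂₂)⁻¹ *ᵥ (v ∘ Sum.inr) ≤ v ⬝ᵥ I *ᵥ v := by
  rw [← Sum.elim_comp_inl_inr v, hI.dotProduct_mulVec_sumElim, Sum.elim_comp_inr]
  exact le_add_of_nonneg_left (hI.toBlocks₁₁.posSemidef.dotProduct_mulVec_nonneg _)

theorem PosDef.exists_dotProduct_mulVec_eq_inv_toBlocks₂₂_inv (hI : I.PosDef) (y : n → ℝ) :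
    ∃ v : m ⊕ n → ℝ, v ∘ Sum.inr = y ∧
      v ⬝ᵥ I *ᵥ v = y ⬝ᵥ ((I⁻¹).toBlocks₂₂)⁻¹ *ᵥ y :=
  ⟨Sum.elim (-((I.toBlocks₁₁⁻¹ * I.toBlocks₁₂) *ᵥ y)) y, Sum.elim_comp_inr _ _, by
    rw [hI.dotProduct_mulVec_sumElim, neg_add_cancel, zero_dotProduct, zero_add]⟩

end Matrix

open Matrix

theorem stmt2_general {q₁ q₂ : ℕ}
    (I : Matrix (Fin q₁ ⊕ Fin q₂) (Fin q₁ ⊕ Fin q₂) ℝ)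
    (hpd : I.PosDef)
    (Z : Fin q₁ ⊕ Fin q₂ → ℝ)
    (Λ₂ : Set (Fin q₂ → ℝ)) :
    sInf {v : ℝ | ∃ l : Fin q₁ ⊕ Fin q₂ → ℝ, (fun i => l (Sum.inr i)) ∈ Λ₂ ∧
        v = (l - Z) ⬝ᵥ I.mulVec (l - Z)} =
    sInf {v : ℝ | ∃ l₂ ∈ Λ₂,
        v = (l₂ - (fun i => Z (Sum.inr i))) ⬝ᵥ
              ((I⁻¹).toBlocks₂₂)⁻¹.mulVec (l₂ - (fun i => Z (Sum.inr i)))} := by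
  apply csInf_eq_csInf_of_forall_exists_le
  · rintro _ ⟨l, hl, rfl⟩
    exact ⟨_, ⟨_, hl, rfl⟩, hpd.dotProduct_inv_toBlocks₂₂_inv_mulVec_le (l - Z)⟩
  · rintro _ ⟨l₂, hl₂, rfl⟩
    obtain ⟨v, hv, hvI⟩ :=
      hpd.exists_dotProduct_mulVec_eq_inv_toBlocks₂₂_inv (l₂ - fun i => Z (Sum.inr i))
    have hl : (fun i => (v + Z) (Sum.inr i)) = l₂ := by
      rw [← sub_add_cancel l₂ (fun i => Z (Sum.inr i)), ← hv]
      rfl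
    exact ⟨_, ⟨v + Z, hl ▸ hl₂, rfl⟩, by rw [add_sub_cancel_right, hvI]⟩

/-- For a symmetric positive definite matrix `ℐ` partitioned according to `r = q₁ + q₂`,
`Z ∈ ℝ^r`, `C = (ℐ⁻¹)₂₂` and `Λ = ℝ^{q₁} × Λ₂` with `Λ₂ ≠ ∅`,
`inf_{λ ∈ Λ} (λ − Z)ᵀ ℐ (λ − Z) = inf_{λ₂ ∈ Λ₂} (λ₂ − Z₂)ᵀ C⁻¹ (λ₂ − Z₂)`. -/
theorem stmt2 {q₁ q₂ : ℕ}
    (I : Matrix (Fin q₁ ⊕ Fin q₂) (Fin q₁ ⊕ Fin q₂) ℝ)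
    (hsymm : I.IsSymm) (hpd : I.PosDef)
    (Z : Fin q₁ ⊕ Fin q₂ → ℝ)
    (Λ₂ : Set (Fin q₂ → ℝ)) (hΛ₂ : Λ₂.Nonempty) :
    sInf {v : ℝ | ∃ l : Fin q₁ ⊕ Fin q₂ → ℝ, (fun i => l (Sum.inr i)) ∈ Λ₂ ∧
        v = (l - Z) ⬝ᵥ I.mulVec (l - Z)} =
    sInf {v : ℝ | ∃ l₂ ∈ Λ₂,
        v = (l₂ - (fun i => Z (Sum.inr i))) ⬝ᵥ
              ((I⁻¹).toBlocks₂₂)⁻¹.mulVec (l₂ - (fun i => Z (Sum.inr i)))} :=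
  stmt2_general I hpd Z Λ₂
end

section
/- Let α ∈ (0, 1), let (μ₁, σ₁²), (μ₂, σ₂²), (μ*, σ*²) ∈ ℝ × (0, ∞), and suppose that for all x ∈ ℝ: α·f(x; μ₁, σ₁²) + (1 − α)·f(x; μ₂, σ₂²) = f(x; μ*, σ*²), where f(·; μ, σ²) is the N(μ, σ²) density. Then (μ₁, σ₁²) = (μ₂, σ₂²) = (μ*, σ*²). -/
lemma lin_le (b c : ℝ) (h : ∀ x, b * x ≤ c) : b = 0 := by
  by_contra hb
  have H := h ((c + 1) / b)
  rw [mul_div_cancel₀ _ hb] at H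
  linarith

lemma quad_le (a b c : ℝ) (h : ∀ x, a * x ^ 2 + b * x ≤ c) : a ≤ 0 := by
  by_contra hc
  push_neg at hc
  have hx1 : 1 ≤ (|b| + |c| + 1) / a + 1 := by
    have : 0 ≤ (|b| + |c| + 1) / a := by positivity
    linarith
  have hax : a * ((|b| + |c| + 1) / a + 1) = |b| + |c| + 1 + a := by
    field_simp
  have H := h ((|b| + |c| + 1) / a + 1)
  generalize hgen : (|b| + |c| + 1) / a + 1 = x at hx1 hax H
  nlinarith [le_abs_self b, neg_abs_le b, le_abs_self c, abs_nonneg b, abs_nonneg c]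

lemma two_quad (a₁ b₁ c₁ a₂ b₂ c₂ : ℝ) (ha₁ : 0 < a₁) (ha₂ : 0 < a₂)
    (h : ∀ x, a₁ * x ^ 2 + b₁ * x ≤ c₁ ∨ a₂ * x ^ 2 + b₂ * x ≤ c₂) : False := by
  have hx1 : (|b₁| + |c₁| + 1) / a₁ + 1 ≤ max ((|b₁| + |c₁| + 1) / a₁ + 1) ((|b₂| + |c₂| + 1) / a₂ + 1) := le_max_left _ _
  have hx2 : (|b₂| + |c₂| + 1) / a₂ + 1 ≤ max ((|b₁| + |c₁| + 1) / a₁ + 1) ((|b₂| + |c₂| + 1) / a₂ + 1) := le_max_right _ _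
  have hp1 : 0 < (|b₁| + |c₁| + 1) / a₁ := by positivity
  have hp2 : 0 < (|b₂| + |c₂| + 1) / a₂ := by positivity
  have H := h (max ((|b₁| + |c₁| + 1) / a₁ + 1) ((|b₂| + |c₂| + 1) / a₂ + 1))
  generalize hgen : max ((|b₁| + |c₁| + 1) / a₁ + 1) ((|b₂| + |c₂| + 1) / a₂ + 1) = x at hx1 hx2 H
  have hxx : 1 ≤ x := by linarith
  have hax1 : |b₁| + |c₁| + 1 + a₁ ≤ a₁ * x := by
    have : a₁ * ((|b₁| + |c₁| + 1) / a₁ + 1) = |b₁| + |c₁| + 1 + a₁ := by field_simp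
    nlinarith
  have hax2 : |b₂| + |c₂| + 1 + a₂ ≤ a₂ * x := by
    have : a₂ * ((|b₂| + |c₂| + 1) / a₂ + 1) = |b₂| + |c₂| + 1 + a₂ := by field_simp
    nlinarith
  rcases H with H | H
  · nlinarith [le_abs_self b₁, neg_abs_le b₁, le_abs_self c₁, abs_nonneg b₁, abs_nonneg c₁]
  · nlinarith [le_abs_self b₂, neg_abs_le b₂, le_abs_self c₂, abs_nonneg b₂, abs_nonneg c₂]

lemma quad_eq (a b c : ℝ) (h : ∀ x, a * x ^ 2 + b * x + c = 0) : a = 0 ∧ b = 0 ∧ c = 0 := by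
  have h0 := h 0
  have h1 := h 1
  have h2 := h (-1)
  refine ⟨by linarith, by linarith, by linarith⟩

/-- The `N(μ, σ²)` density. -/
noncomputable def ndens (x μ v : ℝ) : ℝ :=
  (2 * Real.pi * v) ^ (-(1 : ℝ) / 2) * Real.exp (-(x - μ) ^ 2 / (2 * v))

lemma ndens_pos (x μ v : ℝ) (hv : 0 < v) : 0 < ndens x μ v := by
  have : (0:ℝ) < 2 * Real.pi * v := by positivity
  unfold ndens
  positivity

lemma log_ndens (x μ v : ℝ) (hv : 0 < v) :
    Real.log (ndens x μ v) =
      (-(1:ℝ)/2) * Real.log (2 * Real.pi * v) - (x - μ) ^ 2 / (2 * v) := by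
  have h2 : (0:ℝ) < 2 * Real.pi * v := by positivity
  unfold ndens
  rw [Real.log_mul (by positivity) (Real.exp_ne_zero _), Real.log_rpow h2, Real.log_exp]
  ring

set_option maxHeartbeats 2000000 in
lemma key (α μ₁ μ₂ μs v₁ v₂ vs : ℝ) (hα0 : 0 < α) (hα1 : α < 1)
    (h₁ : 0 < v₁) (h₂ : 0 < v₂) (hs : 0 < vs) (hv : v₂ ≤ v₁)
    (h : ∀ x : ℝ, α * ndens x μ₁ v₁ + (1 - α) * ndens x μ₂ v₂ = ndens x μs vs) :
    (μ₁ = μs ∧ v₁ = vs) ∧ (μ₂ = μs ∧ v₂ = vs) := by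
  have d1 := fun x => ndens_pos x μ₁ v₁ h₁
  have d2 := fun x => ndens_pos x μ₂ v₂ h₂
  have ds := fun x => ndens_pos x μs vs hs
  obtain ⟨K₁, hK₁⟩ : ∃ k, (-(1:ℝ)/2) * Real.log (2 * Real.pi * v₁) = k := ⟨_, rfl⟩
  obtain ⟨K₂, hK₂⟩ : ∃ k, (-(1:ℝ)/2) * Real.log (2 * Real.pi * v₂) = k := ⟨_, rfl⟩
  obtain ⟨Ks, hKs⟩ : ∃ k, (-(1:ℝ)/2) * Real.log (2 * Real.pi * vs) = k := ⟨_, rfl⟩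
  have L1 : ∀ x : ℝ, Real.log (ndens x μ₁ v₁) = K₁ - (x - μ₁) ^ 2 / (2 * v₁) := by
    intro x; rw [log_ndens x μ₁ v₁ h₁, hK₁]
  have L2 : ∀ x : ℝ, Real.log (ndens x μ₂ v₂) = K₂ - (x - μ₂) ^ 2 / (2 * v₂) := by
    intro x; rw [log_ndens x μ₂ v₂ h₂, hK₂]
  have Ls : ∀ x : ℝ, Real.log (ndens x μs vs) = Ks - (x - μs) ^ 2 / (2 * vs) := by
    intro x; rw [log_ndens x μs vs hs, hKs]
  -- log inequality for component 1
  have logineq : ∀ x : ℝ,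
      Real.log α + (K₁ - (x - μ₁) ^ 2 / (2 * v₁)) ≤ Ks - (x - μs) ^ 2 / (2 * vs) := by
    intro x
    have hle : α * ndens x μ₁ v₁ ≤ ndens x μs vs := by
      have := h x
      nlinarith [d2 x]
    have H := Real.log_le_log (mul_pos hα0 (d1 x)) hle
    rw [Real.log_mul (ne_of_gt hα0) (ne_of_gt (d1 x)), L1 x, Ls x] at H
    linarith
  -- step A : v₁ ≤ vs
  have stepA : v₁ ≤ vs := by
    have key1 : ∀ x : ℝ, (1/(2*vs) - 1/(2*v₁)) * x ^ 2 + (μ₁/v₁ - μs/vs) * x ≤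
        Ks - Real.log α - K₁ + μ₁^2/(2*v₁) - μs^2/(2*vs) := by
      intro x
      have H := logineq x
      have expand : (1/(2*vs) - 1/(2*v₁)) * x ^ 2 + (μ₁/v₁ - μs/vs) * x -
          (Ks - Real.log α - K₁ + μ₁^2/(2*v₁) - μs^2/(2*vs)) =
          (Real.log α + (K₁ - (x - μ₁) ^ 2 / (2 * v₁))) - (Ks - (x - μs) ^ 2 / (2 * vs)) := by
        field_simp
        ring
      linarith
    have ha := quad_le _ _ _ key1
    have hprod : (1/(2*v₁) - 1/(2*vs)) * (2*(v₁*vs)) = vs - v₁ := by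
      field_simp; try ring
    have hnn := mul_nonneg (by linarith : (0:ℝ) ≤ 1/(2*v₁) - 1/(2*vs))
      (by positivity : (0:ℝ) ≤ 2*(v₁*vs))
    rw [hprod] at hnn
    linarith
  -- step B : vs ≤ v₁
  have stepB : vs ≤ v₁ := by
    by_contra hvs
    push_neg at hvs
    have hvs2 : v₂ < vs := lt_of_le_of_lt hv hvs
    have ha₁ : 0 < 1/(2*v₁) - 1/(2*vs) := by
      have hprod : (1/(2*v₁) - 1/(2*vs)) * (2*(v₁*vs)) = vs - v₁ := by field_simp; try ring
      nlinarith [hprod, (by positivity : (0:ℝ) < 2*(v₁*vs))]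
    have ha₂ : 0 < 1/(2*v₂) - 1/(2*vs) := by
      have hprod : (1/(2*v₂) - 1/(2*vs)) * (2*(v₂*vs)) = vs - v₂ := by field_simp; try ring
      nlinarith [hprod, (by positivity : (0:ℝ) < 2*(v₂*vs))]
    refine two_quad (1/(2*v₁) - 1/(2*vs)) (μs/vs - μ₁/v₁)
      (Real.log 2 + K₁ - Ks - μ₁^2/(2*v₁) + μs^2/(2*vs))
      (1/(2*v₂) - 1/(2*vs)) (μs/vs - μ₂/v₂)
      (Real.log 2 + K₂ - Ks - μ₂^2/(2*v₂) + μs^2/(2*vs)) ha₁ ha₂ ?_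
    intro x
    have hsum : ndens x μs vs ≤ ndens x μ₁ v₁ + ndens x μ₂ v₂ := by
      have := h x
      nlinarith [d1 x, d2 x]
    rcases le_total (ndens x μ₁ v₁) (ndens x μ₂ v₂) with hc | hc
    · right
      have hle : ndens x μs vs ≤ 2 * ndens x μ₂ v₂ := by linarith
      have H := Real.log_le_log (ds x) hle
      rw [Real.log_mul (by norm_num) (ne_of_gt (d2 x)), L2 x, Ls x] at H
      have expand : (1/(2*v₂) - 1/(2*vs)) * x ^ 2 + (μs/vs - μ₂/v₂) * x -
          (Real.log 2 + K₂ - Ks - μ₂^2/(2*v₂) + μs^2/(2*vs)) =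
          (Ks - (x - μs) ^ 2 / (2 * vs)) - (Real.log 2 + (K₂ - (x - μ₂) ^ 2 / (2 * v₂))) := by
        field_simp
        ring
      linarith
    · left
      have hle : ndens x μs vs ≤ 2 * ndens x μ₁ v₁ := by linarith
      have H := Real.log_le_log (ds x) hle
      rw [Real.log_mul (by norm_num) (ne_of_gt (d1 x)), L1 x, Ls x] at H
      have expand : (1/(2*v₁) - 1/(2*vs)) * x ^ 2 + (μs/vs - μ₁/v₁) * x -
          (Real.log 2 + K₁ - Ks - μ₁^2/(2*v₁) + μs^2/(2*vs)) =
          (Ks - (x - μs) ^ 2 / (2 * vs)) - (Real.log 2 + (K₁ - (x - μ₁) ^ 2 / (2 * v₁))) := by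
        field_simp
        ring
      linarith
  have hv1s : v₁ = vs := le_antisymm stepA stepB
  -- μ₁ = μs
  have hm1 : μ₁ = μs := by
    have key1 : ∀ x : ℝ, ((μ₁ - μs)/v₁) * x ≤
        Ks - Real.log α - K₁ + μ₁^2/(2*v₁) - μs^2/(2*v₁) := by
      intro x
      have H := logineq x
      rw [← hv1s] at H
      have expand : ((μ₁ - μs)/v₁) * x -
          (Ks - Real.log α - K₁ + μ₁^2/(2*v₁) - μs^2/(2*v₁)) =
          (Real.log α + (K₁ - (x - μ₁) ^ 2 / (2 * v₁))) - (Ks - (x - μs) ^ 2 / (2 * v₁)) := by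
        field_simp
        ring
      linarith
    have hb := lin_le _ _ key1
    rcases div_eq_zero_iff.mp hb with hb | hb
    · linarith
    · exact absurd hb (ne_of_gt h₁)
  -- component 2 equals the target density
  have heq2 : ∀ x : ℝ, ndens x μ₂ v₂ = ndens x μs vs := by
    intro x
    have H := h x
    rw [hm1, hv1s] at H
    have h1α : (1 - α) ≠ 0 := by linarith
    have : (1 - α) * ndens x μ₂ v₂ = (1 - α) * ndens x μs vs := by linarith
    exact mul_left_cancel₀ h1α this
  -- extract parameters of component 2
  have logeq : ∀ x : ℝ,
      (1/(2*vs) - 1/(2*v₂)) * x ^ 2 + (μ₂/v₂ - μs/vs) * x +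
        (K₂ - Ks + μs^2/(2*vs) - μ₂^2/(2*v₂)) = 0 := by
    intro x
    have H := congrArg Real.log (heq2 x)
    rw [L2 x, Ls x] at H
    have expand : (1/(2*vs) - 1/(2*v₂)) * x ^ 2 + (μ₂/v₂ - μs/vs) * x +
        (K₂ - Ks + μs^2/(2*vs) - μ₂^2/(2*v₂)) =
        (K₂ - (x - μ₂) ^ 2 / (2 * v₂)) - (Ks - (x - μs) ^ 2 / (2 * vs)) := by
      field_simp
      ring
    rw [expand, H]
    ring
  obtain ⟨hA, hB, -⟩ := quad_eq _ _ _ logeq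
  have hv2s : v₂ = vs := by
    have hprod : (1/(2*vs) - 1/(2*v₂)) * (2*(v₂*vs)) = v₂ - vs := by field_simp; try ring
    rw [hA, zero_mul] at hprod
    linarith
  have hm2 : μ₂ = μs := by
    rw [hv2s] at hB
    have hprod : (μ₂/vs - μs/vs) * vs = μ₂ - μs := by field_simp; try ring
    rw [hB, zero_mul] at hprod
    linarith
  exact ⟨⟨hm1, hv1s⟩, ⟨hm2, hv2s⟩⟩


/-- Degenerate-mixture identifiability for two-component Gaussian mixtures: if a
proper mixture of two normal densities equals a single normal density pointwise,
then both components equal that density. -/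
theorem stmt15 (α μ₁ μ₂ μs v₁ v₂ vs : ℝ) (hα : α ∈ Set.Ioo (0 : ℝ) 1)
    (h₁ : 0 < v₁) (h₂ : 0 < v₂) (hs : 0 < vs)
    (h : ∀ x : ℝ, α * ndens x μ₁ v₁ + (1 - α) * ndens x μ₂ v₂ = ndens x μs vs) :
    (μ₁ = μs ∧ v₁ = vs) ∧ (μ₂ = μs ∧ v₂ = vs) := by
  obtain ⟨hα0, hα1⟩ := hα
  rcases le_total v₂ v₁ with hv | hv
  · exact key α μ₁ μ₂ μs v₁ v₂ vs hα0 hα1 h₁ h₂ hs hv h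
  · have h' : ∀ x : ℝ, (1 - α) * ndens x μ₂ v₂ + (1 - (1 - α)) * ndens x μ₁ v₁ =
        ndens x μs vs := by
      intro x
      have := h x
      linarith
    obtain ⟨A, B⟩ := key (1 - α) μ₂ μ₁ μs v₂ v₁ vs (by linarith) (by linarith)
      h₂ h₁ hs hv h'
    exact ⟨B, A⟩
end
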